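/- arXiv:1806.05416 — 5 statements merged into one kernel-verified Lean document; each statement's English description precedes it below -/
import Mathlib

section
/- Let k, n ≥ 0 be integers with k ≥ n. Then the number of partitions of n + C(k+1,2) that have exactly k different values for the parts equals the self convolution of the unrestricted partition function at n, i.e. p(k, n + C(k+1,2)) = Σ_{m=0}^{n} p(m) · p(n − m). -/
/-!
List the distinct part sizes of `π` as `d₁ < ⋯ < d_k`. Since `d_i ≥ i`, the numbers
`d_i - i` form a weakly increasing sequence, i.e. (after dropping zeros) a partition `α` of
`m = ∑ d_i - (k+1).choose 2`, and removing one copy of each `d_i` from `π` leaves a partition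
`β` of `n - m`. Conversely, pad `α ⊢ m` with zeros to `k` entries and add the staircase `1, …, k`:
since `α` has at most `m` nonzero parts, the resulting set of sizes contains `1, …, k - m`, so
the parts of `β ⊢ n - m ≤ k - m` create no new sizes.
-/

/-- `p n`: the number of (unrestricted) partitions of `n`. -/
def numPartitions (n : ℕ) : ℕ := Fintype.card (Nat.Partition n)

/-- `p(k,n)`: the number of partitions of `n` with exactly `k` distinct part sizes. -/
def numPartitionsWithKMagnitudes (k n : ℕ) : ℕ :=
  Fintype.card {π : Nat.Partition n // π.parts.toFinset.card = k}

namespace List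

theorem pairwise_lt_mapIdx_add_succ {l : List ℕ} (hl : l.Pairwise (· ≤ ·)) :
    (l.mapIdx fun i x => x + (i + 1)).Pairwise (· < ·) := by
  rw [List.pairwise_iff_getElem] at hl ⊢
  intro i j hi hj hij
  simp only [List.getElem_mapIdx]
  have := hl i j (by simpa using hi) (by simpa using hj) hij
  omega

theorem succ_le_getElem_of_pairwise_lt {l : List ℕ} (hl : l.Pairwise (· < ·))
    (hpos : ∀ x ∈ l, 0 < x) : ∀ i (hi : i < l.length), i + 1 ≤ l[i]
  | 0, hi => hpos _ (l.getElem_mem hi)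
  | i + 1, hi => by
    have := succ_le_getElem_of_pairwise_lt hl hpos i (by omega)
    have := List.pairwise_iff_getElem.1 hl i (i + 1) (by omega) hi (by omega)
    omega

theorem pairwise_le_mapIdx_sub_succ {l : List ℕ} (hl : l.Pairwise (· < ·)) :
    (l.mapIdx fun i x => x - (i + 1)).Pairwise (· ≤ ·) := by
  refine List.isChain_iff_pairwise.1 (List.isChain_iff_getElem.2 fun i hi => ?_)
  simp only [List.getElem_mapIdx]
  have := List.pairwise_iff_getElem.1 hl i (i + 1) (by simpa using hi.trans_le' (by omega))
    (by simpa using hi) (by omega)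
  omega

theorem mapIdx_add_succ_mapIdx_sub_succ {l : List ℕ} (hl : l.Pairwise (· < ·))
    (hpos : ∀ x ∈ l, 0 < x) :
    ((l.mapIdx fun i x => x - (i + 1)).mapIdx fun i x => x + (i + 1)) = l := by
  refine List.ext_getElem (by simp) fun i h _ => ?_
  have := succ_le_getElem_of_pairwise_lt hl hpos i (by simpa using h)
  simp only [List.getElem_mapIdx]
  omega

theorem sum_mapIdx_add_succ (l : List ℕ) :
    (l.mapIdx fun i x => x + (i + 1)).sum = l.sum + (l.length + 1).choose 2 := by
  induction l using List.reverseRecOn with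
  | nil => simp
  | append_singleton l x ih =>
    rw [List.mapIdx_append, List.mapIdx_singleton, List.sum_append, List.sum_append, ih,
      List.sum_singleton, List.sum_singleton, List.length_append, List.length_singleton,
      Nat.choose_succ_succ' (l.length + 1), Nat.choose_one_right]
    ring

end List

namespace Multiset

theorem filter_ne_zero_replicate_zero_add {s : Multiset ℕ} (hs : 0 ∉ s) (j : ℕ) :
    (replicate j 0 + s).filter (· ≠ 0) = s := by
  rw [filter_add, filter_eq_nil.2 fun x hx => by simp [eq_of_mem_replicate hx], zero_add,
    filter_eq_self.2 fun _ hx => ne_of_mem_of_not_mem hx hs]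

theorem replicate_zero_add_filter_ne_zero (s : Multiset ℕ) :
    replicate (card s - card (s.filter (· ≠ 0))) 0 + s.filter (· ≠ 0) = s := by
  have hsplit := filter_add_not (· = 0) s
  have hcard := congrArg card hsplit
  simp only [filter_eq', card_add, card_replicate] at hsplit hcard
  rw [← hcard, Nat.add_sub_cancel, hsplit]

theorem toFinset_val_add {α : Type*} [DecidableEq α] {t : Finset α} {s : Multiset α}
    (h : ∀ x ∈ s, x ∈ t) : (t.val + s).toFinset = t := by
  rw [toFinset_add, Finset.val_toFinset, Finset.union_eq_left]
  exact fun x hx => h x (mem_toFinset.1 hx)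

def addStaircase (s : Multiset ℕ) : Finset ℕ :=
  (s.sort.mapIdx fun i x => x + (i + 1)).toFinset

theorem sort_addStaircase (s : Multiset ℕ) :
    s.addStaircase.sort = s.sort.mapIdx fun i x => x + (i + 1) :=
  (List.toFinset_sort _ (List.pairwise_lt_mapIdx_add_succ (pairwise_sort s _)).nodup).2
    ((List.pairwise_lt_mapIdx_add_succ (pairwise_sort s _)).imp le_of_lt)

theorem card_addStaircase (s : Multiset ℕ) : s.addStaircase.card = card s := by
  rw [← Finset.length_sort (· ≤ ·), sort_addStaircase, List.length_mapIdx, length_sort]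

theorem zero_notMem_addStaircase (s : Multiset ℕ) : 0 ∉ s.addStaircase := by
  simp [addStaircase, List.mem_mapIdx]

theorem sum_addStaircase (s : Multiset ℕ) :
    s.addStaircase.val.sum = s.sum + (card s + 1).choose 2 := by
  rw [← Finset.sort_eq _ (· ≤ ·), sort_addStaircase, sum_coe, List.sum_mapIdx_add_succ,
    length_sort, ← sum_coe, sort_eq]

theorem sort_replicate_zero_add (s : Multiset ℕ) (j : ℕ) :
    (replicate j 0 + s).sort = List.replicate j 0 ++ s.sort := by
  refine List.Perm.eq_of_pairwise' (pairwise_sort _ _) ?_ ?_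
  · rw [List.pairwise_append]
    exact ⟨List.pairwise_replicate.2 (Or.inr le_rfl), pairwise_sort _ _, fun x hx _ _ => by
      simp [List.eq_of_mem_replicate hx]⟩
  · rw [← coe_eq_coe, sort_eq, ← coe_add, sort_eq, coe_replicate]

theorem Icc_subset_addStaircase (s : Multiset ℕ) (j : ℕ) :
    Finset.Icc 1 j ⊆ (replicate j 0 + s).addStaircase := by
  intro b hb
  obtain ⟨hb1, hbj⟩ := Finset.mem_Icc.1 hb
  have hlt : b - 1 < j := by omega
  simp only [addStaircase, sort_replicate_zero_add, List.mem_toFinset, List.mem_mapIdx]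
  refine ⟨b - 1, by simp only [List.length_append, List.length_replicate]; omega, ?_⟩
  rw [List.getElem_append_left (by simpa using hlt), List.getElem_replicate]
  omega

end Multiset

namespace Finset

def subStaircase (t : Finset ℕ) : Multiset ℕ :=
  (t.sort.mapIdx fun i x => x - (i + 1) : List ℕ)

theorem card_subStaircase (t : Finset ℕ) : Multiset.card t.subStaircase = t.card := by
  simp [subStaircase]

theorem addStaircase_subStaircase {t : Finset ℕ} (ht : 0 ∉ t) :
    t.subStaircase.addStaircase = t := by
  have hpos : ∀ x ∈ t.sort, 0 < x := fun _ hx =>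
    Nat.pos_of_ne_zero (ne_of_mem_of_not_mem ((mem_sort _).1 hx) ht)
  have hsort : t.subStaircase.sort = t.sort.mapIdx fun i x => x - (i + 1) :=
    List.mergeSort_eq_self _ (List.pairwise_le_mapIdx_sub_succ (sortedLT_sort t).pairwise)
  rw [Multiset.addStaircase, hsort,
    List.mapIdx_add_succ_mapIdx_sub_succ (sortedLT_sort t).pairwise hpos, sort_toFinset]

theorem subStaircase_addStaircase (s : Multiset ℕ) : s.addStaircase.subStaircase = s := by
  simp only [subStaircase, Multiset.sort_addStaircase, List.mapIdx_mapIdx]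
  conv_rhs => rw [← Multiset.sort_eq s (· ≤ ·)]
  congr 1
  exact List.ext_getElem (by simp) fun i _ _ => by simp

theorem sum_val_eq_sum_subStaircase_add {t : Finset ℕ} (ht : 0 ∉ t) :
    t.val.sum = t.subStaircase.sum + (t.card + 1).choose 2 := by
  conv_lhs => rw [← addStaircase_subStaircase ht]
  rw [Multiset.sum_addStaircase, card_subStaircase]

end Finset

namespace Nat.Partition

variable {m : ℕ}

theorem zero_notMem_parts (α : Nat.Partition m) : 0 ∉ α.parts := fun h => (α.parts_pos h).false

theorem card_parts_le (α : Nat.Partition m) : Multiset.card α.parts ≤ m := by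
  simpa [α.parts_sum] using Multiset.card_nsmul_le_sum fun _ hx => α.parts_pos hx

theorem sum_sub_toFinset_add (α : Nat.Partition m) :
    (α.parts - α.parts.toFinset.val).sum + α.parts.toFinset.val.sum = m := by
  rw [← Multiset.sum_add, Multiset.toFinset_val, tsub_add_cancel_of_le (Multiset.dedup_le _),
    α.parts_sum]

def staircase (k : ℕ) (α : Nat.Partition m) : Finset ℕ :=
  (Multiset.replicate (k - Multiset.card α.parts) 0 + α.parts).addStaircase

variable {k : ℕ}

theorem card_staircase (α : Nat.Partition m) (hmk : m ≤ k) : (α.staircase k).card = k := by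
  rw [staircase, Multiset.card_addStaircase, Multiset.card_add, Multiset.card_replicate]
  have := α.card_parts_le
  omega

theorem sum_staircase (α : Nat.Partition m) (hmk : m ≤ k) :
    (α.staircase k).val.sum = m + (k + 1).choose 2 := by
  rw [staircase, Multiset.sum_addStaircase, Multiset.sum_add, Multiset.sum_replicate,
    smul_zero, zero_add, α.parts_sum, Multiset.card_add, Multiset.card_replicate]
  have := α.card_parts_le
  congr 3
  omega

theorem Icc_subset_staircase (α : Nat.Partition m) : Finset.Icc 1 (k - m) ⊆ α.staircase k :=
  (Finset.Icc_subset_Icc_right (Nat.sub_le_sub_left α.card_parts_le k)).trans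
    (Multiset.Icc_subset_addStaircase _ _)

theorem staircase_ofSums_subStaircase {t : Finset ℕ} (ht : 0 ∉ t) (hk : t.card = k) :
    (Nat.Partition.ofSums _ t.subStaircase rfl).staircase k = t := by
  rw [staircase, ofSums_parts, ← hk, ← t.card_subStaircase,
    Multiset.replicate_zero_add_filter_ne_zero, Finset.addStaircase_subStaircase ht]

end Nat.Partition

section PartitionPairs

variable {k n : ℕ}

theorem partitionPair_ext {x y : Σ m : Fin (n + 1), Nat.Partition m × Nat.Partition (n - m)}
    (h₁ : x.2.1.parts = y.2.1.parts) (h₂ : x.2.2.parts = y.2.2.parts) : x = y := by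
  obtain ⟨m, α, β⟩ := x
  obtain ⟨m', α', β'⟩ := y
  obtain rfl : m = m' := Fin.ext (α.parts_sum.symm.trans (h₁ ▸ α'.parts_sum))
  obtain rfl : α = α' := Nat.Partition.ext h₁
  obtain rfl : β = β' := Nat.Partition.ext h₂
  rfl

theorem mem_staircase_of_mem_parts {m : ℕ} (α : Nat.Partition m)
    (β : Nat.Partition (n - m)) (hkn : n ≤ k) {b : ℕ} (hb : b ∈ β.parts) :
    b ∈ α.staircase k :=
  α.Icc_subset_staircase <| Finset.mem_Icc.2
    ⟨β.parts_pos hb, (β.le_of_mem_parts hb).trans (Nat.sub_le_sub_right hkn _)⟩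

def partitionPairToKMagnitudes (hkn : n ≤ k)
    (x : Σ m : Fin (n + 1), Nat.Partition m × Nat.Partition (n - m)) :
    {π : Nat.Partition (n + (k + 1).choose 2) // π.parts.toFinset.card = k} :=
  have hmk : (x.1 : ℕ) ≤ k := (Nat.le_of_lt_succ x.1.isLt).trans hkn
  ⟨⟨(x.2.1.staircase k).val + x.2.2.parts,
    fun hb => (Multiset.mem_add.1 hb).elim
      (fun hb => Nat.pos_of_ne_zero fun h => Multiset.zero_notMem_addStaircase _ (h ▸ hb))
      x.2.2.parts_pos,
    by
      rw [Multiset.sum_add, x.2.1.sum_staircase hmk, x.2.2.parts_sum]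
      have := x.1.isLt
      omega⟩,
    by rw [Multiset.toFinset_val_add fun b => mem_staircase_of_mem_parts x.2.1 x.2.2 hkn,
      x.2.1.card_staircase hmk]⟩

theorem partitionPairToKMagnitudes_parts (hkn : n ≤ k)
    (x : Σ m : Fin (n + 1), Nat.Partition m × Nat.Partition (n - m)) :
    (partitionPairToKMagnitudes hkn x).1.parts = (x.2.1.staircase k).val + x.2.2.parts :=
  rfl

def kMagnitudesToPartitionPair
    (π : {π : Nat.Partition (n + (k + 1).choose 2) // π.parts.toFinset.card = k}) :
    Σ m : Fin (n + 1), Nat.Partition m × Nat.Partition (n - m) :=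
  have hsum := π.1.sum_sub_toFinset_add
  have hstair := Finset.sum_val_eq_sum_subStaircase_add
    (mt Multiset.mem_toFinset.1 π.1.zero_notMem_parts)
  ⟨⟨π.1.parts.toFinset.subStaircase.sum, by rw [π.2] at hstair; omega⟩,
    Nat.Partition.ofSums _ π.1.parts.toFinset.subStaircase rfl,
    ⟨π.1.parts - π.1.parts.toFinset.val,
      fun hb => π.1.parts_pos (Multiset.mem_of_le (Multiset.sub_le_self _ _) hb),
      by rw [π.2] at hstair; dsimp only; omega⟩⟩

theorem kMagnitudesToPartitionPair_fst_parts
    (π : {π : Nat.Partition (n + (k + 1).choose 2) // π.parts.toFinset.card = k}) :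
    (kMagnitudesToPartitionPair π).2.1.parts =
      π.1.parts.toFinset.subStaircase.filter (· ≠ 0) :=
  rfl

theorem staircase_kMagnitudesToPartitionPair
    (π : {π : Nat.Partition (n + (k + 1).choose 2) // π.parts.toFinset.card = k}) :
    (kMagnitudesToPartitionPair π).2.1.staircase k = π.1.parts.toFinset :=
  Nat.Partition.staircase_ofSums_subStaircase
    (mt Multiset.mem_toFinset.1 π.1.zero_notMem_parts) π.2

theorem kMagnitudesToPartitionPair_snd_parts
    (π : {π : Nat.Partition (n + (k + 1).choose 2) // π.parts.toFinset.card = k}) :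
    (kMagnitudesToPartitionPair π).2.2.parts = π.1.parts - π.1.parts.toFinset.val :=
  rfl

def kMagnitudesEquivPartitionPairs (hkn : n ≤ k) :
    {π : Nat.Partition (n + (k + 1).choose 2) // π.parts.toFinset.card = k} ≃
      Σ m : Fin (n + 1), Nat.Partition m × Nat.Partition (n - m) where
  toFun := kMagnitudesToPartitionPair
  invFun := partitionPairToKMagnitudes hkn
  left_inv π := by
    refine Subtype.ext (Nat.Partition.ext ?_)
    rw [partitionPairToKMagnitudes_parts, staircase_kMagnitudesToPartitionPair,
      kMagnitudesToPartitionPair_snd_parts, Multiset.toFinset_val,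
      add_tsub_cancel_of_le (Multiset.dedup_le _)]
  right_inv x := by
    have hD : (partitionPairToKMagnitudes hkn x).1.parts.toFinset = x.2.1.staircase k :=
      Multiset.toFinset_val_add fun b => mem_staircase_of_mem_parts x.2.1 x.2.2 hkn
    apply partitionPair_ext
    · rw [kMagnitudesToPartitionPair_fst_parts, hD,
        Nat.Partition.staircase, Finset.subStaircase_addStaircase,
        Multiset.filter_ne_zero_replicate_zero_add x.2.1.zero_notMem_parts]
    · rw [kMagnitudesToPartitionPair_snd_parts, hD, partitionPairToKMagnitudes_parts,
        add_tsub_cancel_left]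

end PartitionPairs

theorem partitions_k_magnitudes_shifted_eq_self_convolution (k n : ℕ) (hkn : n ≤ k) :
    numPartitionsWithKMagnitudes k (n + (k + 1).choose 2) =
      ∑ m ∈ Finset.range (n + 1), numPartitions m * numPartitions (n - m) := by
  rw [numPartitionsWithKMagnitudes, Fintype.card_congr (kMagnitudesEquivPartitionPairs hkn),
    Fintype.card_sigma, ← Fin.sum_univ_eq_sum_range]
  simp only [Fintype.card_prod, numPartitions]
end

section
/- Let k, n ≥ 0 be integers. Then p(k,n) = Σ_{m = C(k+1,2)}^{n} a(k,m) · p(n − m), where a(k,m) = Σ_{j ≥ k} (−1)^{j−k} · C(j,k) · q(j,m) (the sum over j is finite since q(j,m) = 0 for j > m). -/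
/-- `q(k,n)`: the number of partitions of `n` into exactly `k` distinct parts. -/
def numDistinctPartitionsWithKParts (k n : ℕ) : ℕ :=
  Fintype.card {π : Nat.Partition n // π.parts.card = k ∧ π.parts.Nodup}

/-- `a(k,m) = Σ_{j ≥ k} (−1)^(j−k) C(j,k) q(j,m)`; the sum is finite since
`q(j,m) = 0` for `j > m`. -/
def mercaA (k m : ℕ) : ℤ :=
  ∑ j ∈ Finset.Icc k m,
    (-1) ^ (j - k) * (j.choose k : ℤ) * (numDistinctPartitionsWithKParts j m : ℤ)

/-!
Mark `j` of the distinct part sizes of a partition of `n`. Reading the marked sizes as a partition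
into `j` distinct parts and the remaining parts as a second partition counts these objects as
`∑ₘ q(j,m) p(n-m)`; counting them directly gives `∑_π C(d(π), j)`, with `d(π)` the number of
distinct part sizes. Binomial inversion, `∑ⱼ (-1)^(j-k) C(j,k) C(i,j) = [i = k]`, then isolates
`p(k,n)`. The sum over `m` may start at `C(k+1,2)` because `j` distinct positive parts sum to at
least `C(j+1,2)`.
-/

open Finset

theorem Nat.Partition.card_parts_le_s1 {n : ℕ} (π : n.Partition) : Multiset.card π.parts ≤ n := by
  simpa [π.parts_sum] using
    Multiset.card_nsmul_le_sum (s := π.parts) (a := 1) fun _ hx => π.parts_pos hx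

/-- `A` has more than `(#A + 1).choose 2` subset sums, all lying in `[0, ∑ A]`. -/
theorem Finset.choose_two_le_sum_of_pos {A : Finset ℕ} (hA : ∀ x ∈ A, 0 < x) :
    (#A + 1).choose 2 ≤ ∑ x ∈ A, x := by
  have hsub : A.subsetSum ⊆ range (∑ x ∈ A, x + 1) := fun s hs => by
    obtain ⟨B, hB, rfl⟩ := mem_subsetSum_iff.mp hs
    exact mem_range_succ_iff.mpr (sum_le_sum_of_subset hB)
  have := (card_succ_choose_two_lt_card_subsetSum_of_pos hA).trans_le (card_le_card hsub)
  rw [card_range] at this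
  omega

theorem Nat.self_le_succ_choose_two (j : ℕ) : j ≤ (j + 1).choose 2 := by
  rw [Nat.choose_succ_succ', Nat.choose_one_right]
  omega

theorem sum_range_neg_one_pow_mul_choose_mul_choose {i k N : ℕ} (hi : i ≤ N) :
    ∑ j ∈ range (N + 1), (-1 : ℤ) ^ (j - k) * (j.choose k : ℤ) * (i.choose j : ℤ) =
      if i = k then 1 else 0 := by
  have hsupp : ∑ j ∈ range (N + 1), (-1 : ℤ) ^ (j - k) * (j.choose k : ℤ) * (i.choose j : ℤ) =
      ∑ j ∈ Ico k (i + 1), (-1 : ℤ) ^ (j - k) * (j.choose k : ℤ) * (i.choose j : ℤ) := by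
    refine (sum_subset (fun j hj => ?_) fun j _ hj => ?_).symm
    · simp only [mem_Ico, mem_range] at hj ⊢; omega
    · rcases lt_or_ge j k with hjk | hkj
      · simp [Nat.choose_eq_zero_of_lt hjk]
      · simp [Nat.choose_eq_zero_of_lt (show i < j by simp only [mem_Ico] at hj; omega)]
  rw [hsupp, sum_Ico_eq_sum_range]
  rcases lt_or_ge i k with hik | hki
  · simp [Nat.sub_eq_zero_of_le (show i + 1 ≤ k by omega), hik.ne]
  · have hterm : ∀ t ∈ range (i + 1 - k), (-1 : ℤ) ^ (k + t - k) * ((k + t).choose k : ℤ) *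
        (i.choose (k + t) : ℤ) = (i.choose k : ℤ) * ((-1) ^ t * ((i - k).choose t : ℤ)) := by
      intro t _
      have := Nat.choose_mul (n := i) (k := k + t) (s := k) (by omega)
      rw [Nat.add_sub_cancel_left] at this ⊢
      rw [mul_assoc, mul_comm _ (i.choose (k + t) : ℤ), ← Nat.cast_mul, this]
      push_cast; ring
    rw [sum_congr rfl hterm, ← mul_sum, show i + 1 - k = i - k + 1 by omega,
      Int.alternating_sum_range_choose]
    rcases eq_or_ne i k with rfl | h
    · simp
    · simp [h, show i - k ≠ 0 by omega]

theorem numDistinctPartitionsWithKParts_eq_zero_of_lt_choose {j m : ℕ}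
    (h : m < (j + 1).choose 2) : numDistinctPartitionsWithKParts j m = 0 := by
  refine Fintype.card_eq_zero_iff.mpr ⟨fun ⟨σ, hcard, hnodup⟩ => h.not_ge ?_⟩
  have := choose_two_le_sum_of_pos (A := ⟨σ.parts, hnodup⟩) fun _ hx => σ.parts_pos hx
  simpa [Finset.sum_mk, hcard, σ.parts_sum] using this

theorem mercaA_eq_zero_of_lt {k m : ℕ} (h : m < (k + 1).choose 2) : mercaA k m = 0 := by
  refine sum_eq_zero fun j hj => ?_
  have hkj : (k + 1).choose 2 ≤ (j + 1).choose 2 :=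
    Nat.choose_le_choose 2 (by simp only [mem_Icc] at hj; omega)
  simp [numDistinctPartitionsWithKParts_eq_zero_of_lt_choose (h.trans_le hkj)]

theorem mercaA_eq_sum_range {k m N : ℕ} (hm : m ≤ N) :
    mercaA k m = ∑ j ∈ range (N + 1),
      (-1) ^ (j - k) * (j.choose k : ℤ) * (numDistinctPartitionsWithKParts j m : ℤ) := by
  refine sum_subset (fun j hj => ?_) fun j _ hj => ?_
  · simp only [mem_Icc, mem_range] at hj ⊢; omega
  · rcases lt_or_ge j k with hjk | hkj
    · simp [Nat.choose_eq_zero_of_lt hjk]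
    · have hmj : m < (j + 1).choose 2 := by
        simp only [mem_Icc] at hj; have := Nat.self_le_succ_choose_two j; omega
      simp [numDistinctPartitionsWithKParts_eq_zero_of_lt_choose hmj]

section DoubleCounting

variable {j n : ℕ}

abbrev PartitionWithMarkedSizes (j n : ℕ) : Type :=
  Σ π : n.Partition, π.parts.toFinset.powersetCard j

abbrev DistinctPartitionAndPartition (j n : ℕ) : Type :=
  Σ m : Fin (n + 1),
    {σ : (m : ℕ).Partition // Multiset.card σ.parts = j ∧ σ.parts.Nodup} × (n - m).Partition

/-- The common encoding of both types above: `s` is the set of marked sizes, resp. the distinct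
partition, and `t` the remaining parts, resp. the second partition. -/
def SplitParts (j n : ℕ) : Type :=
  {st : Multiset ℕ × Multiset ℕ //
    st.1.Nodup ∧ Multiset.card st.1 = j ∧ (∀ x ∈ st.1 + st.2, 0 < x) ∧ (st.1 + st.2).sum = n}

theorem PartitionWithMarkedSizes.val_le_parts (x : PartitionWithMarkedSizes j n) :
    x.2.1.val ≤ x.1.parts :=
  (Multiset.le_iff_subset x.2.1.nodup).mpr fun _ ha =>
    Multiset.mem_toFinset.mp ((mem_powersetCard.mp x.2.2).1 ha)

def PartitionWithMarkedSizes.toSplitParts (x : PartitionWithMarkedSizes j n) : SplitParts j n :=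
  ⟨(x.2.1.val, x.1.parts - x.2.1.val), x.2.1.nodup, (mem_powersetCard.mp x.2.2).2,
    by rw [add_tsub_cancel_of_le x.val_le_parts]; exact fun _ => x.1.parts_pos,
    by rw [add_tsub_cancel_of_le x.val_le_parts, x.1.parts_sum]⟩

theorem PartitionWithMarkedSizes.toSplitParts_bijective :
    Function.Bijective (toSplitParts : PartitionWithMarkedSizes j n → SplitParts j n) := by
  constructor
  · rintro ⟨π, S⟩ ⟨π', S'⟩ h
    have hval : S.1.val = S'.1.val := congrArg (fun z : SplitParts j n => z.val.1) h
    have hrest : π.parts - S.1.val = π'.parts - S'.1.val :=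
      congrArg (fun z : SplitParts j n => z.val.2) h
    obtain rfl : π = π' := Nat.Partition.ext <| calc
      π.parts = S.1.val + (π.parts - S.1.val) :=
        (add_tsub_cancel_of_le (val_le_parts ⟨π, S⟩)).symm
      _ = S'.1.val + (π'.parts - S'.1.val) := by rw [hrest, hval]
      _ = π'.parts := add_tsub_cancel_of_le (val_le_parts ⟨π', S'⟩)
    obtain rfl : S = S' := Subtype.ext (Finset.val_inj.mp hval)
    rfl
  · rintro ⟨⟨s, t⟩, hnodup, hcard, hpos, hsum⟩
    let π : n.Partition := ⟨s + t, hpos _, hsum⟩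
    have hS : s.toFinset ∈ π.parts.toFinset.powersetCard j := mem_powersetCard.mpr
      ⟨Multiset.toFinset_subset.mpr (Multiset.subset_of_le (Multiset.le_add_right s t)),
        by rw [Multiset.toFinset_card_of_nodup hnodup, hcard]⟩
    refine ⟨⟨π, s.toFinset, hS⟩, Subtype.ext ?_⟩
    change (s.dedup, s + t - s.dedup) = (s, t)
    rw [Multiset.dedup_eq_self.mpr hnodup, add_tsub_cancel_left]

def DistinctPartitionAndPartition.toSplitParts (x : DistinctPartitionAndPartition j n) :
    SplitParts j n :=
  ⟨(x.2.1.1.parts, x.2.2.parts), x.2.1.2.2, x.2.1.2.1,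
    fun _ hy => (Multiset.mem_add.mp hy).elim x.2.1.1.parts_pos x.2.2.parts_pos,
    by rw [Multiset.sum_add, x.2.1.1.parts_sum, x.2.2.parts_sum]; have := x.1.isLt; omega⟩

theorem DistinctPartitionAndPartition.toSplitParts_bijective :
    Function.Bijective (toSplitParts : DistinctPartitionAndPartition j n → SplitParts j n) := by
  constructor
  · rintro ⟨⟨m, hm⟩, ⟨σ, hσ⟩, τ⟩ ⟨⟨m', hm'⟩, ⟨σ', hσ'⟩, τ'⟩ h
    have hσσ' : σ.parts = σ'.parts := congrArg (fun z : SplitParts j n => z.val.1) h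
    have hττ' : τ.parts = τ'.parts := congrArg (fun z : SplitParts j n => z.val.2) h
    obtain rfl : m = m' := σ.parts_sum.symm.trans (hσσ' ▸ σ'.parts_sum)
    obtain rfl : σ = σ' := Nat.Partition.ext hσσ'
    obtain rfl : τ = τ' := Nat.Partition.ext hττ'
    rfl
  · rintro ⟨⟨s, t⟩, hnodup, hcard, hpos, hsum : (s + t).sum = n⟩
    rw [Multiset.sum_add] at hsum
    refine ⟨⟨⟨s.sum, by omega⟩, ⟨⟨s, fun hx => hpos _ (Multiset.mem_add.mpr (Or.inl hx)), rfl⟩,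
      hcard, hnodup⟩, ⟨t, fun hx => hpos _ (Multiset.mem_add.mpr (Or.inr hx)), by
        simp only; omega⟩⟩, rfl⟩

theorem sum_numDistinctPartitionsWithKParts_mul_numPartitions (j n : ℕ) :
    ∑ m ∈ range (n + 1), numDistinctPartitionsWithKParts j m * numPartitions (n - m) =
      ∑ π : n.Partition, (#π.parts.toFinset).choose j := by
  have hcard := Fintype.card_congr
    ((Equiv.ofBijective _ DistinctPartitionAndPartition.toSplitParts_bijective).trans
      (Equiv.ofBijective _ PartitionWithMarkedSizes.toSplitParts_bijective).symm :
        DistinctPartitionAndPartition j n ≃ PartitionWithMarkedSizes j n)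
  simp only [Fintype.card_sigma, Fintype.card_prod, Fintype.card_coe, card_powersetCard] at hcard
  rw [← hcard, ← Fin.sum_univ_eq_sum_range]
  rfl

end DoubleCounting

theorem merca_identity (k n : ℕ) :
    (numPartitionsWithKMagnitudes k n : ℤ) =
      ∑ m ∈ Finset.Icc ((k + 1).choose 2) n, mercaA k m * (numPartitions (n - m) : ℤ) := by
  have hcount (j : ℕ) : ∑ m ∈ range (n + 1),
      (numDistinctPartitionsWithKParts j m : ℤ) * (numPartitions (n - m) : ℤ) =
        ∑ π : n.Partition, ((#π.parts.toFinset).choose j : ℤ) := by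
    exact_mod_cast sum_numDistinctPartitionsWithKParts_mul_numPartitions j n
  symm
  calc ∑ m ∈ Icc ((k + 1).choose 2) n, mercaA k m * (numPartitions (n - m) : ℤ)
      = ∑ m ∈ range (n + 1), mercaA k m * (numPartitions (n - m) : ℤ) := by
        refine sum_subset (fun m hm => ?_) fun m _ hm => ?_
        · simp only [mem_Icc, mem_range] at hm ⊢; omega
        · rw [mercaA_eq_zero_of_lt (by simp only [mem_Icc, mem_range] at *; omega), zero_mul]
    _ = ∑ j ∈ range (n + 1), (-1) ^ (j - k) * (j.choose k : ℤ) * ∑ m ∈ range (n + 1),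
          (numDistinctPartitionsWithKParts j m : ℤ) * (numPartitions (n - m) : ℤ) := by
        simp_rw [mul_sum]
        rw [sum_comm]
        refine sum_congr rfl fun m hm => ?_
        simp_rw [mercaA_eq_sum_range (mem_range_succ_iff.mp hm), sum_mul, mul_assoc]
    _ = ∑ π : n.Partition, ∑ j ∈ range (n + 1),
          (-1) ^ (j - k) * (j.choose k : ℤ) * ((#π.parts.toFinset).choose j : ℤ) := by
        simp_rw [hcount, mul_sum]
        exact sum_comm
    _ = ∑ π : n.Partition, if #π.parts.toFinset = k then 1 else 0 :=
        sum_congr rfl fun π _ => sum_range_neg_one_pow_mul_choose_mul_choose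
          ((Multiset.toFinset_card_le _).trans π.card_parts_le_s1)
    _ = numPartitionsWithKMagnitudes k n := by
        simp [numPartitionsWithKMagnitudes, Fintype.card_subtype]
end

section
/- For every integer n ≥ 0, Σ_{k ≥ 0, C(k+1,2) ≤ n} p(n − C(k+1,2)) = Σ_{m=0}^{n} q(m) · q(n − m), where the left-hand sum ranges over all k with C(k+1,2) ≤ n. -/
/-- `q n`: the number of partitions of `n` into distinct parts. -/
def numDistinctPartitions (n : ℕ) : ℕ :=
  Fintype.card {π : Nat.Partition n // π.parts.Nodup}

/-!
The identity is the coefficient of `X ^ n` in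
`(∑ k, X ^ C(k+1,2)) * ∑ p(n) X ^ n = (∑ q(n) X ^ n) ^ 2`, which we prove modulo `X ^ (n + 1)`
from the finite product `∏_{i=1}^{2m} (X ^ m + X ^ i)`, computed in two ways.

Expanding over subsets of `{1, …, 2m}` gives `∑_k X ^ (m (2m - k)) E_{2m,k}`, where `E_{N,k}` is
the generating function of the `k`-subsets of `{1, …, N}` by their sum. The `q`-binomial identity
`E_{a+b,a} (X;X)_a (X;X)_b = X ^ C(a+1,2) (X;X)_{a+b}` shows that `E_{a+b,a}` agrees with
`X ^ C(a+1,2) ∑ p(n) X ^ n` up to degree `C(a+1,2) + min a b`. Hence for `m > n`, after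
dividing by `X ^ (C(m+1,2) + m²)`, both `k = m + j` and `k = m - 1 - j` contribute
`X ^ C(j+1,2) ∑ p(n) X ^ n` below degree `n + 1`.

Factoring out the powers of `X` instead gives
`X ^ (C(m+1,2) + m²) ∏_{j<m} (1 + X ^ j) ∏_{j=1}^{m} (1 + X ^ j)`, and the first product is
`2 ∏_{j=1}^{m-1} (1 + X ^ j)`; both partial products agree with `∑ q(n) X ^ n` in low degrees.
-/

open Finset PowerSeries PowerSeries.WithPiTopology

theorem Multiset.esymm_cons_succ {R : Type*} [CommSemiring R] (a : R) (s : Multiset R) (k : ℕ) :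
    (a ::ₘ s).esymm (k + 1) = s.esymm (k + 1) + a * s.esymm k := by
  simp [Multiset.esymm, Multiset.powersetCard_cons, Multiset.map_map, Multiset.sum_map_mul_left]

theorem dvd_prod_sub_one {R ι : Type*} [CommRing R] {s : Finset ι} {f : ι → R} {a : R}
    (h : ∀ i ∈ s, a ∣ f i - 1) : a ∣ ∏ i ∈ s, f i - 1 := by
  refine prod_induction f (fun g => a ∣ g - 1) (fun g g' hg hg' => ?_) (by simp) h
  rw [show g * g' - 1 = (g - 1) * g' + (g' - 1) by ring]
  exact dvd_add (dvd_mul_of_dvd_left hg _) hg'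

theorem choose_two_succ_succ (k : ℕ) : (k + 2).choose 2 = (k + 1).choose 2 + (k + 1) := by
  rw [Nat.choose_succ_succ', Nat.choose_one_right, add_comm]

theorem self_le_choose_two_succ (k : ℕ) : k ≤ (k + 1).choose 2 := by
  cases k with
  | zero => simp
  | succ k => rw [choose_two_succ_succ]; omega

theorem prod_range_pow_succ {M : Type*} [CommMonoid M] (x : M) (m : ℕ) :
    ∏ i ∈ range m, x ^ (i + 1) = x ^ (m + 1).choose 2 := by
  induction m with
  | zero => simp
  | succ m ih => rw [prod_range_succ, ih, choose_two_succ_succ, ← pow_add]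

noncomputable section

variable {R : Type*} [CommRing R]

def qPochhammer (k : ℕ) : R⟦X⟧ := ∏ i ∈ range k, (1 - X ^ (i + 1))

theorem qPochhammer_succ (k : ℕ) :
    (qPochhammer (k + 1) : R⟦X⟧) = qPochhammer k * (1 - X ^ (k + 1)) :=
  prod_range_succ _ _

theorem isUnit_qPochhammer (k : ℕ) : IsUnit (qPochhammer k : R⟦X⟧) := by
  rw [isUnit_iff_constantCoeff, qPochhammer, map_prod]
  simp

/-- `∑ X ^ (∑ A)` over the `k`-subsets `A` of `{1, …, N}`, that is `X ^ C(k+1,2)` times the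
Gaussian binomial `[N k]_X`. -/
def subsetSumGenFun (N k : ℕ) : R⟦X⟧ :=
  ((Multiset.range N).map fun i => (X : R⟦X⟧) ^ (i + 1)).esymm k

theorem subsetSumGenFun_zero_right (N : ℕ) : (subsetSumGenFun N 0 : R⟦X⟧) = 1 := by
  simp [subsetSumGenFun, Multiset.esymm, Multiset.powersetCard_zero_left]

theorem subsetSumGenFun_eq_zero_of_lt {N k : ℕ} (h : N < k) :
    (subsetSumGenFun N k : R⟦X⟧) = 0 := by
  rw [subsetSumGenFun, Multiset.esymm, Multiset.powersetCard_eq_empty _ (by simpa using h)]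
  simp

theorem subsetSumGenFun_succ_succ (N k : ℕ) :
    (subsetSumGenFun (N + 1) (k + 1) : R⟦X⟧) =
      subsetSumGenFun N (k + 1) + X ^ (N + 1) * subsetSumGenFun N k := by
  simp only [subsetSumGenFun, Multiset.range_succ, Multiset.map_cons, Multiset.esymm_cons_succ]

theorem subsetSumGenFun_self (N : ℕ) :
    (subsetSumGenFun N N : R⟦X⟧) = X ^ (N + 1).choose 2 := by
  induction N with
  | zero => simp [subsetSumGenFun_zero_right]
  | succ N ih =>
    rw [subsetSumGenFun_succ_succ, subsetSumGenFun_eq_zero_of_lt N.lt_succ_self, ih,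
      choose_two_succ_succ, ← pow_add, zero_add, add_comm]

theorem subsetSumGenFun_mul_qPochhammer (a b : ℕ) :
    (subsetSumGenFun (a + b) a * (qPochhammer a * qPochhammer b) : R⟦X⟧) =
      X ^ (a + 1).choose 2 * qPochhammer (a + b) := by
  induction a generalizing b with
  | zero => simp [subsetSumGenFun_zero_right, qPochhammer]
  | succ a iha =>
    induction b with
    | zero => simp [subsetSumGenFun_self, qPochhammer]
    | succ b ihb =>
      have h1 := iha (b + 1)
      rw [show a + 1 + b = a + (b + 1) by ring] at ihb
      rw [show a + 1 + (b + 1) = a + (b + 1) + 1 by ring, subsetSumGenFun_succ_succ,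
        qPochhammer_succ (a + (b + 1)), qPochhammer_succ b]
      rw [qPochhammer_succ b] at h1
      rw [qPochhammer_succ a, choose_two_succ_succ, pow_add X ((a + 1).choose 2)] at ihb ⊢
      linear_combination (1 - X ^ (b + 1)) * ihb + X ^ (a + (b + 1) + 1) * (1 - X ^ (a + 1)) * h1

theorem prod_range_X_pow_add_X_pow (m N : ℕ) :
    ∏ i ∈ range N, ((X : R⟦X⟧) ^ m + X ^ (i + 1)) =
      ∑ k ∈ range (N + 1), X ^ (m * (N - k)) * subsetSumGenFun N k := by
  have h := congrArg (Polynomial.eval ((X : R⟦X⟧) ^ m))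
    (Multiset.prod_X_add_C_eq_sum_esymm ((Multiset.range N).map fun i => (X : R⟦X⟧) ^ (i + 1)))
  simp only [Polynomial.eval_multiset_prod, Polynomial.eval_finsetSum, Multiset.map_map,
    Function.comp_def, Polynomial.eval_add, Polynomial.eval_X, Polynomial.eval_C,
    Polynomial.eval_mul, Polynomial.eval_pow, Multiset.card_map, Multiset.card_range] at h
  rw [prod_eq_multiset_prod, range_val, h]
  exact sum_congr rfl fun k _ => by rw [subsetSumGenFun, pow_mul, mul_comm]

theorem prod_range_two_mul_X_pow_add_X_pow (m : ℕ) :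
    ∏ i ∈ range (2 * m), ((X : R⟦X⟧) ^ m + X ^ (i + 1)) =
      X ^ ((m + 1).choose 2 + m * m) *
        ((∏ j ∈ range m, (1 + X ^ j)) * ∏ j ∈ range m, (1 + X ^ (j + 1))) := by
  have hlow : ∏ i ∈ range m, ((X : R⟦X⟧) ^ m + X ^ (i + 1)) =
      X ^ (m + 1).choose 2 * ∏ j ∈ range m, (1 + X ^ j) := by
    rw [← prod_range_reflect (fun j => 1 + (X : R⟦X⟧) ^ j) m, ← prod_range_pow_succ,
      ← prod_mul_distrib]
    refine prod_congr rfl fun i hi => ?_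
    rw [mul_add, mul_one, ← pow_add, add_comm, show i + 1 + (m - 1 - i) = m by simp at hi; omega]
  have hup : ∏ i ∈ range m, ((X : R⟦X⟧) ^ m + X ^ (m + i + 1)) =
      X ^ (m * m) * ∏ j ∈ range m, (1 + X ^ (j + 1)) := by
    rw [pow_mul, ← card_range m, ← prod_const (X ^ _), card_range, ← prod_mul_distrib]
    exact prod_congr rfl fun i _ => by ring
  rw [two_mul, prod_range_add, hlow, hup]
  ring

variable (R) in
def partitionSeries : R⟦X⟧ := mk fun n => (numPartitions n : R)

variable (R) in
def distinctPartitionSeries : R⟦X⟧ := mk fun n => (numDistinctPartitions n : R)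

theorem X_pow_succ_dvd_partitionSeries_mul_qPochhammer_sub_one (k : ℕ) :
    X ^ (k + 1) ∣ partitionSeries R * qPochhammer k - 1 := by
  -- Mathlib's product formulas are `HasProd` statements; with the discrete topology on `R`
  -- they apply to any ring, and here the products are finite.
  let _ : TopologicalSpace R := ⊥
  have _ : DiscreteTopology R := ⟨rfl⟩
  have hPk : (PowerSeries.mk fun n => (#(Nat.Partition.restricted n (· ≤ k)) : R)) *
      qPochhammer k = 1 := by
    rw [← (Nat.Partition.hasProd_powerSeriesMk_card_restricted R (· ≤ k)).tprod_eq,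
      tprod_eq_prod (s := range k) fun i hi => if_neg (by simpa using hi), qPochhammer,
      ← prod_mul_distrib]
    refine prod_eq_one fun i hi => ?_
    rw [if_pos (by simpa using hi)]
    simp_rw [pow_mul]
    exact tsum_pow_mul_one_sub_of_constantCoeff_eq_zero (by simp)
  have hP : X ^ (k + 1) ∣
      partitionSeries R - PowerSeries.mk fun n => (#(Nat.Partition.restricted n (· ≤ k)) : R) := by
    refine X_pow_dvd_iff.mpr fun d hd => ?_
    have : Nat.Partition.restricted d (· ≤ k) = univ :=
      filter_true_of_mem fun p _ i hi => (Nat.Partition.le_of_mem_parts hi).trans (by omega)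
    simp [partitionSeries, numPartitions, this]
  rw [← hPk, ← sub_mul]
  exact dvd_mul_of_dvd_left hP _

theorem X_pow_succ_dvd_distinctPartitionSeries_sub_prod (m : ℕ) :
    X ^ (m + 1) ∣ distinctPartitionSeries R - ∏ i ∈ range m, (1 + X ^ (i + 1)) := by
  let _ : TopologicalSpace R := ⊥
  have _ : DiscreteTopology R := ⟨rfl⟩
  let f : ℕ → ℕ → R := fun i c => if i ≤ m ∧ c < 2 then 1 else 0
  have hf : Nat.Partition.genFun f = ∏ i ∈ range m, (1 + X ^ (i + 1)) := by
    rw [← (Nat.Partition.hasProd_genFun f).tprod_eq, tprod_eq_prod (s := range m)]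
    · refine prod_congr rfl fun i hi => ?_
      rw [tsum_eq_single 0 fun j hj => by simp [f, hj]]
      simp [f, Nat.succ_le_of_lt (mem_range.mp hi)]
    · intro i hi
      simp [f, show ¬ i + 1 ≤ m by simpa using hi]
  rw [← hf]
  refine X_pow_dvd_iff.mpr fun d hd => ?_
  simp only [distinctPartitionSeries, numDistinctPartitions, map_sub, coeff_mk,
    Nat.Partition.coeff_genFun, Finsupp.prod, f, prod_boole]
  rw [sum_boole, Fintype.card_subtype, sub_eq_zero]
  congr 2
  refine filter_congr fun p _ => ?_
  simp only [Multiset.toFinsupp_support, Multiset.mem_toFinset, Multiset.toFinsupp_apply,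
    Multiset.nodup_iff_count_le_one]
  constructor
  · intro h i hi
    exact ⟨(Nat.Partition.le_of_mem_parts hi).trans (by omega), Nat.lt_succ_of_le (h i)⟩
  · intro h i
    by_cases hi : i ∈ p.parts
    · exact Nat.le_of_lt_succ (h i hi).2
    · simp [Multiset.count_eq_zero_of_notMem hi]

theorem X_pow_dvd_subsetSumGenFun_sub (a b : ℕ) :
    X ^ ((a + 1).choose 2 + min a b + 1) ∣
      subsetSumGenFun (a + b) a - X ^ (a + 1).choose 2 * partitionSeries R := by
  set H : R⟦X⟧ := ∏ i ∈ range a, (1 - X ^ (b + i + 1))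
  have hE : subsetSumGenFun (a + b) a * qPochhammer a = X ^ (a + 1).choose 2 * H := by
    refine (isUnit_qPochhammer b).mul_right_cancel ?_
    rw [mul_assoc, subsetSumGenFun_mul_qPochhammer, add_comm a b, qPochhammer, prod_range_add,
      ← qPochhammer]
    ring
  have hH : X ^ (b + 1) ∣ H - 1 := dvd_prod_sub_one fun i _ => ⟨-X ^ i, by ring⟩
  have hP := X_pow_succ_dvd_partitionSeries_mul_qPochhammer_sub_one (R := R) a
  rw [← (isUnit_qPochhammer a).dvd_mul_right, sub_mul, hE, mul_assoc, ← mul_sub,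
    show H - partitionSeries R * qPochhammer a = (H - 1) - (partitionSeries R * qPochhammer a - 1)
      by ring, add_assoc, pow_add]
  exact mul_dvd_mul_left _ (dvd_sub ((pow_dvd_pow X (by omega)).trans hH)
    ((pow_dvd_pow X (by omega)).trans hP))

theorem X_pow_mul_dvd_X_pow_mul_iff (c : ℕ) {f g : R⟦X⟧} : X ^ c * f ∣ X ^ c * g ↔ f ∣ g :=
  ⟨fun ⟨u, hu⟩ => ⟨u, X_pow_mul_cancel (by rw [hu, mul_assoc])⟩, mul_dvd_mul_left _⟩

theorem X_pow_dvd_X_pow_mul_subsetSumGenFun_sub {N a b e c t n : ℕ} (hab : a + b = N)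
    (he : e + (a + 1).choose 2 = c + t) (hn : n ≤ t + min a b) :
    X ^ c * X ^ (n + 1) ∣ X ^ e * subsetSumGenFun N a - X ^ c * (X ^ t * partitionSeries R) := by
  subst hab
  rw [← mul_assoc, ← pow_add X c t, ← he, pow_add X e, mul_assoc, ← mul_sub, ← pow_add]
  refine (pow_dvd_pow X (by omega : c + (n + 1) ≤ e + ((a + 1).choose 2 + min a b + 1))).trans ?_
  rw [pow_add]
  exact mul_dvd_mul_left _ (X_pow_dvd_subsetSumGenFun_sub a b)

/-- The finite Jacobi triple product at `z = 1`, truncated in degree `n`. -/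
theorem X_pow_succ_dvd_prod_one_add_X_pow_mul_sub {n m : ℕ} (h : n < m) :
    X ^ (n + 1) ∣ (∏ j ∈ range m, (1 + X ^ j)) * (∏ j ∈ range m, (1 + X ^ (j + 1))) -
      (∑ j ∈ range m, X ^ (j + 1).choose 2 + ∑ j ∈ range (m + 1), X ^ (j + 1).choose 2) *
        partitionSeries R := by
  set c := (m + 1).choose 2 + m * m with hc
  rw [← X_pow_mul_dvd_X_pow_mul_iff c, mul_sub, ← prod_range_two_mul_X_pow_add_X_pow,
    prod_range_X_pow_add_X_pow, show 2 * m + 1 = m + (m + 1) by ring, sum_range_add,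
    ← sum_range_reflect (fun k => X ^ (m * (2 * m - k)) * subsetSumGenFun (2 * m) k) m,
    add_mul, mul_add, sum_mul, sum_mul, mul_sum, mul_sum, add_sub_add_comm, ← sum_sub_distrib,
    ← sum_sub_distrib]
  refine dvd_add (dvd_sum fun j hj => ?_) (dvd_sum fun j hj => ?_)
  · have hj := mem_range.mp hj
    refine X_pow_dvd_X_pow_mul_subsetSumGenFun_sub (b := m + 1 + j) (by omega) ?_
      (by have := self_le_choose_two_succ j; omega)
    obtain ⟨d, rfl⟩ := Nat.exists_eq_add_of_lt hj
    rw [show 2 * (j + d + 1) - (j + d + 1 - 1 - j) = 2 * j + d + 2 by omega,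
      show j + d + 1 - 1 - j + 1 = d + 1 by omega, hc]
    qify [Nat.cast_choose_two]
    ring
  · have hj := Nat.lt_succ_iff.mp (mem_range.mp hj)
    refine X_pow_dvd_X_pow_mul_subsetSumGenFun_sub (b := m - j) (by omega) ?_
      (by have := self_le_choose_two_succ j; omega)
    obtain ⟨d, rfl⟩ := Nat.exists_eq_add_of_le hj
    rw [show 2 * (j + d) - (j + d + j) = d by omega, hc]
    qify [Nat.cast_choose_two]
    ring

theorem X_pow_succ_dvd_two_mul_distinctPartitionSeries_mul_self_sub (n : ℕ) :
    X ^ (n + 1) ∣ 2 * (distinctPartitionSeries R * distinctPartitionSeries R -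
      (∑ j ∈ range (n + 1), X ^ (j + 1).choose 2) * partitionSeries R) := by
  let π := Ideal.Quotient.mk (Ideal.span {(X : R⟦X⟧) ^ (n + 1)})
  have hπ {f : R⟦X⟧} : π f = 0 ↔ X ^ (n + 1) ∣ f := by
    rw [Ideal.Quotient.eq_zero_iff_mem, Ideal.mem_span_singleton]
  have hcongr {d : ℕ} {f g : R⟦X⟧} (hd : n + 1 ≤ d) (h : X ^ d ∣ f - g) : π f = π g := by
    rw [← sub_eq_zero, ← map_sub, hπ]
    exact (pow_dvd_pow X hd).trans h
  have hD := hcongr le_rfl (X_pow_succ_dvd_distinctPartitionSeries_sub_prod (R := R) n)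
  have hD' := hcongr (by omega) (X_pow_succ_dvd_distinctPartitionSeries_sub_prod (R := R) (n + 1))
  have hJ := hcongr le_rfl (X_pow_succ_dvd_prod_one_add_X_pow_mul_sub (R := R) n.lt_succ_self)
  have hX : π (X ^ (n + 2).choose 2) = 0 := hπ.mpr (pow_dvd_pow X (self_le_choose_two_succ _))
  rw [prod_range_succ', sum_range_succ _ (n + 1)] at hJ
  simp only [pow_zero, map_mul, map_add, map_one, Nat.succ_eq_add_one] at hJ
  rw [← hπ, map_mul, map_sub, map_mul, map_mul, map_ofNat]
  linear_combination hJ + 2 * π (∏ i ∈ range (n + 1), (1 + X ^ (i + 1))) * hD +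
    2 * π (distinctPartitionSeries R) * hD' + π (partitionSeries R) * hX

theorem coeff_distinctPartitionSeries_mul_self (n : ℕ) :
    coeff n (distinctPartitionSeries R * distinctPartitionSeries R) =
      ∑ m ∈ range (n + 1), (numDistinctPartitions m : R) * numDistinctPartitions (n - m) := by
  rw [coeff_mul, Nat.sum_antidiagonal_eq_sum_range_succ
    (fun i j => coeff i (distinctPartitionSeries R) * coeff j (distinctPartitionSeries R))]
  simp [distinctPartitionSeries]

theorem coeff_sum_X_pow_choose_two_mul_partitionSeries (n : ℕ) :
    coeff n ((∑ j ∈ range (n + 1), X ^ (j + 1).choose 2) * partitionSeries R) =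
      ∑ k ∈ (range (n + 1)).filter (fun k => (k + 1).choose 2 ≤ n),
        (numPartitions (n - (k + 1).choose 2) : R) := by
  rw [sum_mul, map_sum, sum_filter]
  exact sum_congr rfl fun k _ => by rw [coeff_X_pow_mul']; simp [partitionSeries]

end

theorem sum_partitions_shifted_triangular_eq_distinct_convolution (n : ℕ) :
    ∑ k ∈ (Finset.range (n + 1)).filter (fun k => (k + 1).choose 2 ≤ n),
        numPartitions (n - (k + 1).choose 2) =
      ∑ m ∈ Finset.range (n + 1), numDistinctPartitions m * numDistinctPartitions (n - m) := by
  have h := X_pow_dvd_iff.mp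
    (X_pow_succ_dvd_two_mul_distinctPartitionSeries_mul_self_sub (R := ℤ) n) n n.lt_succ_self
  rw [two_mul, map_add, add_self_eq_zero, map_sub, sub_eq_zero,
    coeff_distinctPartitionSeries_mul_self, coeff_sum_X_pow_choose_two_mul_partitionSeries] at h
  exact_mod_cast h.symm
end

section
/- Let k, n ≥ 0 be integers with n ≥ C(k+1,2). Then q(k,n) = p_k(n − C(k+1,2)), i.e., the number of partitions of n into exactly k distinct parts equals the number of partitions of n − C(k+1,2) with no part greater than k. -/
/-- `p_k(n)`: the number of partitions of `n` with no part greater than `k`. -/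
def numPartitionsMaxPart (k n : ℕ) : ℕ :=
  Fintype.card {π : Nat.Partition n // ∀ i ∈ π.parts, i ≤ k}

/-!
Subtracting the staircase `1, 2, …, k` from the parts `a₀ < ⋯ < a_{k-1}` of a partition of `n`
into `k` distinct parts leaves a nondecreasing sequence `aⱼ - (j + 1)` of sum `n - C(k+1,2)`,
whose conjugate has parts at most `k`. Conversely, a multiset `s` with parts at most `k` yields
the distinct parts `j + 1 + #{p ∈ s | k - j ≤ p}`. This map is injective because the counts
`#{p ∈ s | t ≤ p}` determine `s`, and surjective because every nondecreasing sequence of length `k`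
is such a count sequence.
-/

namespace Multiset

def countGe (s : Multiset ℕ) (t : ℕ) : ℕ :=
  s.countP (t ≤ ·)

theorem countGe_antitone (s : Multiset ℕ) : Antitone s.countGe := by
  intro t t' htt'
  induction s using Multiset.induction with
  | empty => simp [countGe]
  | cons a s ih =>
    simp only [countGe, countP_cons] at ih ⊢
    split_ifs <;> omega

theorem countGe_add (s s' : Multiset ℕ) (t : ℕ) :
    (s + s').countGe t = s.countGe t + s'.countGe t :=
  countP_add _ s s'

theorem countGe_replicate (m v t : ℕ) :
    (replicate m v).countGe t = if t ≤ v then m else 0 := by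
  induction m with
  | zero => simp [countGe]
  | succ m ih =>
    simp only [countGe, replicate_succ, countP_cons] at ih ⊢
    split_ifs at ih ⊢ <;> omega

theorem countGe_eq_count_add_countGe_succ (s : Multiset ℕ) (v : ℕ) :
    s.countGe v = s.count v + s.countGe (v + 1) := by
  induction s using Multiset.induction with
  | empty => simp [countGe]
  | cons a s ih =>
    simp only [countGe, countP_cons, count_cons] at ih ⊢
    split_ifs <;> omega

theorem countGe_eq_zero_of_forall_le {s : Multiset ℕ} {k t : ℕ} (hs : ∀ p ∈ s, p ≤ k)
    (ht : k < t) : s.countGe t = 0 :=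
  countP_eq_zero.2 fun p hp => by have := hs p hp; omega

theorem eq_of_countGe_eq {s s' : Multiset ℕ} (hs : 0 ∉ s) (hs' : 0 ∉ s')
    (h : ∀ t, 0 < t → s.countGe t = s'.countGe t) : s = s' := by
  ext v
  rcases Nat.eq_zero_or_pos v with rfl | hv
  · rw [count_eq_zero.2 hs, count_eq_zero.2 hs']
  · have := s.countGe_eq_count_add_countGe_succ v
    have := s'.countGe_eq_count_add_countGe_succ v
    have := h v hv
    have := h (v + 1) (by omega)
    omega

theorem sum_range_countGe_succ {s : Multiset ℕ} {k : ℕ} (hs : ∀ p ∈ s, p ≤ k) :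
    ∑ t ∈ Finset.range k, s.countGe (t + 1) = s.sum := by
  induction s using Multiset.induction with
  | empty => simp [countGe]
  | cons a s ih =>
    simp only [countGe, countP_cons, sum_cons, Finset.sum_add_distrib] at ih ⊢
    have hrange : (Finset.range k).filter (· + 1 ≤ a) = Finset.range a := by
      ext t
      have := hs a (mem_cons_self a s)
      simp only [Finset.mem_filter, Finset.mem_range]
      omega
    rw [ih fun p hp => hs p (mem_cons_of_mem hp), Finset.sum_boole, hrange]
    simp [add_comm]

end Multiset

open Multiset

def staircase (k : ℕ) (s : Multiset ℕ) (j : Fin k) : ℕ :=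
  j + 1 + s.countGe (k - j)

theorem staircase_strictMono (k : ℕ) (s : Multiset ℕ) : StrictMono (staircase k s) := by
  intro j j' hjj'
  have : s.countGe (k - j) ≤ s.countGe (k - j') := s.countGe_antitone (by omega)
  simp only [staircase]
  omega

theorem sum_range_add_one_eq_choose_two (k : ℕ) :
    ∑ j ∈ Finset.range k, (j + 1) = (k + 1).choose 2 := by
  induction k with
  | zero => rfl
  | succ k ih =>
    rw [Finset.sum_range_succ, ih, Nat.choose_succ_succ' (k + 1), Nat.choose_one_right, add_comm]

theorem sum_staircase {k : ℕ} {s : Multiset ℕ} (hs : ∀ p ∈ s, p ≤ k) :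
    ∑ j, staircase k s j = (k + 1).choose 2 + s.sum := by
  have reflect : ∑ j : Fin k, s.countGe (k - j) = ∑ t ∈ Finset.range k, s.countGe (t + 1) := by
    rw [Fin.sum_univ_eq_sum_range (fun j => s.countGe (k - j)),
      ← Finset.sum_range_reflect (fun t => s.countGe (t + 1))]
    exact Finset.sum_congr rfl fun j hj => by rw [Finset.mem_range] at hj; congr 1; omega
  rw [← sum_range_countGe_succ hs, ← reflect, ← sum_range_add_one_eq_choose_two,
    ← Fin.sum_univ_eq_sum_range, ← Finset.sum_add_distrib]
  rfl

theorem eq_of_staircase_eq {k : ℕ} {s s' : Multiset ℕ} (hs : ∀ p ∈ s, 0 < p ∧ p ≤ k)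
    (hs' : ∀ p ∈ s', 0 < p ∧ p ≤ k) (h : staircase k s = staircase k s') : s = s' := by
  refine eq_of_countGe_eq (fun h0 => (hs 0 h0).1.false) (fun h0 => (hs' 0 h0).1.false)
    fun t ht => ?_
  rcases le_or_gt t k with htk | htk
  · have hj := congrFun h ⟨k - t, by omega⟩
    simp only [staircase, Nat.sub_sub_self htk] at hj
    omega
  · rw [countGe_eq_zero_of_forall_le (fun p hp => (hs p hp).2) htk,
      countGe_eq_zero_of_forall_le (fun p hp => (hs' p hp).2) htk]

theorem exists_staircase_eq : ∀ {k : ℕ} (a : Fin k → ℕ), StrictMono a → (∀ j, 0 < a j) →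
    ∃ s : Multiset ℕ, (∀ p ∈ s, 0 < p ∧ p ≤ k) ∧ staircase k s = a
  | 0, a, _, _ => ⟨0, by simp, funext fun j => j.elim0⟩
  | k + 1, a, ha, hpos => by
    have ha₀ (j : Fin k) : a 0 < a j.succ := ha (Fin.succ_pos j)
    obtain ⟨s, hs, hsa⟩ := exists_staircase_eq (fun j : Fin k => a j.succ - a 0)
      (fun i j hij => Nat.sub_lt_sub_right (ha₀ i).le (ha (Fin.succ_lt_succ_iff.2 hij)))
      (fun j => by have := ha₀ j; omega)
    refine ⟨s + replicate (a 0 - 1) (k + 1), fun p hp => ?_, funext fun j => ?_⟩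
    · rcases mem_add.1 hp with hp | hp
      · exact ⟨(hs p hp).1, by have := (hs p hp).2; omega⟩
      · rw [eq_of_mem_replicate hp]; omega
    · have := hpos 0
      cases j using Fin.cases with
      | zero =>
        have hsk : s.countGe (k + 1) = 0 :=
          countGe_eq_zero_of_forall_le (fun p hp => (hs p hp).2) (Nat.lt_succ_self k)
        simp only [staircase, countGe_add, countGe_replicate, Fin.val_zero, Nat.sub_zero, hsk,
          le_refl, if_true]
        omega
      | succ j =>
        have hj := congrFun hsa j
        have := ha₀ j
        simp only [staircase, countGe_add, countGe_replicate, Fin.val_succ] at hj ⊢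
        rw [if_pos (by omega), show k + 1 - (j + 1) = k - j by omega]
        omega

section

variable {k n : ℕ}

def staircasePartition (h : (k + 1).choose 2 ≤ n)
    (π : {π : Nat.Partition (n - (k + 1).choose 2) // ∀ i ∈ π.parts, i ≤ k}) :
    {π : Nat.Partition n // π.parts.card = k ∧ π.parts.Nodup} :=
  ⟨⟨Finset.univ.val.map (staircase k π.1.parts), by simp [staircase], by
      rw [← Finset.sum_eq_multiset_sum, sum_staircase π.2, π.1.parts_sum]; omega⟩,
    by simp, Finset.univ.nodup.map (staircase_strictMono k _).injective⟩

theorem staircasePartition_injective (h : (k + 1).choose 2 ≤ n) :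
    Function.Injective (staircasePartition h) := by
  rintro ⟨π, hπ⟩ ⟨π', hπ'⟩ heq
  have hparts := congrArg (fun σ => σ.1.parts) heq
  have hrange : Set.range (staircase k π.parts) = Set.range (staircase k π'.parts) := by
    ext x; simpa [staircasePartition] using congrArg (x ∈ ·) hparts
  have := ((staircase_strictMono k _).range_inj (staircase_strictMono k _)).1 hrange
  exact Subtype.ext <| Nat.Partition.ext <| eq_of_staircase_eq
    (fun p hp => ⟨π.parts_pos hp, hπ p hp⟩) (fun p hp => ⟨π'.parts_pos hp, hπ' p hp⟩) this

theorem staircasePartition_surjective (h : (k + 1).choose 2 ≤ n) :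
    Function.Surjective (staircasePartition h) := by
  rintro ⟨σ, hcard, hnodup⟩
  have hA : σ.parts.toFinset.card = k := by rw [toFinset_card_of_nodup hnodup, hcard]
  set a := σ.parts.toFinset.orderEmbOfFin hA
  have ha : Finset.univ.val.map a = σ.parts := by
    have := congrArg Finset.val (Finset.image_orderEmbOfFin_univ σ.parts.toFinset hA)
    rwa [Finset.image_val, toFinset_val, hnodup.dedup,
      (Finset.univ.nodup.map a.injective).dedup] at this
  obtain ⟨s, hs, hsa⟩ := exists_staircase_eq a a.strictMono
    fun j => σ.parts_pos (mem_toFinset.1 (Finset.orderEmbOfFin_mem _ hA j))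
  have hsum : s.sum = n - (k + 1).choose 2 := by
    have := sum_staircase fun p hp => (hs p hp).2
    rw [hsa, Finset.sum_eq_multiset_sum, ha, σ.parts_sum] at this
    omega
  refine ⟨⟨⟨s, fun hp => (hs _ hp).1, hsum⟩, fun p hp => (hs p hp).2⟩, ?_⟩
  exact Subtype.ext <| Nat.Partition.ext <| by simp [staircasePartition, hsa, ha]

end

theorem distinct_k_parts_eq_max_part_shifted (k n : ℕ) (h : (k + 1).choose 2 ≤ n) :
    numDistinctPartitionsWithKParts k n = numPartitionsMaxPart k (n - (k + 1).choose 2) :=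
  (Fintype.card_of_bijective
    ⟨staircasePartition_injective h, staircasePartition_surjective h⟩).symm
end

section
/- Let k, n ≥ 0 be integers with k ≥ n, let m ∈ [0,n], let a_1 ≤ ⋯ ≤ a_r be a partition of m and b_1 ≤ ⋯ ≤ b_s a partition of n − m (all parts positive). Define c_j = j for 1 ≤ j ≤ k − s and c_j = j + b_{j−(k−s)} for k − s + 1 ≤ j ≤ k. Then r + s ≤ k, c_1 < c_2 < ⋯ < c_k, each a_i belongs to {c_1, …, c_{k−s}}, and a_1 + ⋯ + a_r + c_1 + ⋯ + c_k = n + C(k+1,2); in particular the multiset {a_1, …, a_r, c_1, …, c_k} is a partition of n + C(k+1,2) having exactly k different values for the parts. -/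
/-!
The first `k - s` values of `c` are `1, …, k - s` and the last `s` are `j + b_{j-(k-s)}`, which
increase strictly because `b` is non-decreasing, so `c` takes exactly `k` values and
`∑ c = (1 + ⋯ + k) + ∑ b = C(k+1,2) + (n - m)`. Since the parts are positive, `r ≤ m` and
`s ≤ n - m`; hence `r + s ≤ n ≤ k` and every `a_i ≤ m ≤ k - s` is one of the values
`c_j = j`, so adding the `a_i` creates no new value.
-/

open Finset

lemma Finset.le_sum_Icc_one_of_pos {r : ℕ} (f : ℕ → ℕ)
    (hf : ∀ i, 1 ≤ i → i ≤ r → 0 < f i) : r ≤ ∑ i ∈ Icc 1 r, f i := by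
  simpa using (Icc 1 r).card_nsmul_le_sum f 1 fun i hi => hf i (mem_Icc.1 hi).1 (mem_Icc.1 hi).2

lemma Finset.sum_Icc_one_id (k : ℕ) : ∑ j ∈ Icc 1 k, j = (k + 1).choose 2 := by
  induction k with
  | zero => rfl
  | succ k ih =>
    rw [sum_Icc_succ_top (by omega), ih, Nat.choose_succ_succ' (k + 1) 1, Nat.choose_one_right,
      add_comm]

lemma Multiset.toFinset_card_map_add_map_of_image_subset {ι κ α : Type*}
    [DecidableEq ι] [DecidableEq κ] [DecidableEq α]
    (A : Finset ι) (C : Finset κ) (a : ι → α) (c : κ → α)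
    (hsub : A.image a ⊆ C.image c) (hc : Set.InjOn c C) :
    (A.val.map a + C.val.map c).toFinset.card = #C := by
  rw [Multiset.toFinset_add, Multiset.toFinset_map, Multiset.toFinset_map, A.val_toFinset,
    C.val_toFinset, union_eq_right.mpr hsub, card_image_of_injOn hc]

section Construction

variable {k s : ℕ} {b c : ℕ → ℕ}
  (hc1 : ∀ j, 1 ≤ j → j ≤ k - s → c j = j)
  (hc2 : ∀ j, k - s + 1 ≤ j → j ≤ k → c j = j + b (j - (k - s)))
include hc1 hc2

lemma self_le_of_construction {j : ℕ} (hj : j ≤ k) : j ≤ c j := by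
  rcases le_or_gt j (k - s) with h | h
  · rcases Nat.eq_zero_or_pos j with rfl | h0
    · exact Nat.zero_le _
    · rw [hc1 j h0 h]
  · rw [hc2 j h hj]; exact Nat.le_add_right _ _

lemma strictMonoOn_of_construction
    (hb_mono : ∀ i j, 1 ≤ i → i ≤ j → j ≤ s → b i ≤ b j) :
    StrictMonoOn c (Set.Icc 1 k) := by
  rintro i ⟨hi, -⟩ j ⟨-, hj⟩ hij
  rcases le_or_gt j (k - s) with hjs | hjs
  · rw [hc1 i hi (by omega), hc1 j (by omega) hjs]; exact hij
  rw [hc2 j hjs hj]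
  rcases le_or_gt i (k - s) with his | his
  · rw [hc1 i hi his]; omega
  · rw [hc2 i his (by omega)]
    have := hb_mono (i - (k - s)) (j - (k - s)) (by omega) (by omega) (by omega)
    omega

lemma sum_Icc_of_construction (hsk : s ≤ k) :
    ∑ j ∈ Icc 1 k, c j = ∑ i ∈ Icc 1 s, b i + (k + 1).choose 2 := by
  have hsplit : Icc 1 k = Icc 1 (k - s) ∪ Icc (k - s + 1) k := by
    ext x; simp only [mem_Icc, mem_union]; omega
  have hdisj : Disjoint (Icc 1 (k - s)) (Icc (k - s + 1) k) :=
    disjoint_left.mpr fun x hx hx' => by simp only [mem_Icc] at hx hx'; omega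
  have hshift : ∑ j ∈ Icc (k - s + 1) k, b (j - (k - s)) = ∑ i ∈ Icc 1 s, b i := by
    apply sum_nbij' (· - (k - s)) (· + (k - s)) <;> intro x hx <;> simp only [mem_Icc] at * <;>
      omega
  have hlow : ∑ j ∈ Icc 1 (k - s), c j = ∑ j ∈ Icc 1 (k - s), j :=
    sum_congr rfl fun j hj => by rw [mem_Icc] at hj; exact hc1 j hj.1 hj.2
  have hhigh : ∑ j ∈ Icc (k - s + 1) k, c j =
      ∑ j ∈ Icc (k - s + 1) k, j + ∑ i ∈ Icc 1 s, b i := by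
    rw [← hshift, ← sum_add_distrib]
    exact sum_congr rfl fun j hj => by rw [mem_Icc] at hj; exact hc2 j hj.1 hj.2
  rw [hsplit, sum_union hdisj, hlow, hhigh, ← add_assoc, ← sum_union hdisj, ← hsplit,
    sum_Icc_one_id, add_comm]

end Construction

theorem combinatorial_construction_general (k n m r s : ℕ) (hkn : n ≤ k) (hmn : m ≤ n)
    (a b c : ℕ → ℕ)
    -- `a 1 ≤ ⋯ ≤ a r` is a partition of `m` (parts positive, non-decreasing)
    (ha_pos : ∀ i, 1 ≤ i → i ≤ r → 0 < a i)
    (ha_sum : ∑ i ∈ Finset.Icc 1 r, a i = m)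
    -- `b 1 ≤ ⋯ ≤ b s` is a partition of `n - m`
    (hb_pos : ∀ i, 1 ≤ i → i ≤ s → 0 < b i)
    (hb_mono : ∀ i j, 1 ≤ i → i ≤ j → j ≤ s → b i ≤ b j)
    (hb_sum : ∑ i ∈ Finset.Icc 1 s, b i = n - m)
    -- definition of `c`
    (hc1 : ∀ j, 1 ≤ j → j ≤ k - s → c j = j)
    (hc2 : ∀ j, k - s + 1 ≤ j → j ≤ k → c j = j + b (j - (k - s))) :
    -- conclusions
    r + s ≤ k ∧
    (∀ i j, 1 ≤ i → i < j → j ≤ k → c i < c j) ∧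
    (∀ i, 1 ≤ i → i ≤ r → ∃ j, 1 ≤ j ∧ j ≤ k - s ∧ c j = a i) ∧
    ((∑ i ∈ Finset.Icc 1 r, a i) + ∑ j ∈ Finset.Icc 1 k, c j = n + (k + 1).choose 2) ∧
    ∃ π : Nat.Partition (n + (k + 1).choose 2),
      π.parts = (Multiset.Icc 1 r).map a + (Multiset.Icc 1 k).map c ∧
      π.parts.toFinset.card = k := by
  have hr : r ≤ m := ha_sum ▸ le_sum_Icc_one_of_pos a ha_pos
  have hs : s ≤ n - m := hb_sum ▸ le_sum_Icc_one_of_pos b hb_pos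
  have hmono := strictMonoOn_of_construction hc1 hc2 hb_mono
  have ha_mem : ∀ i, 1 ≤ i → i ≤ r → ∃ j, 1 ≤ j ∧ j ≤ k - s ∧ c j = a i := by
    intro i hi hir
    have hai : a i ≤ m :=
      ha_sum ▸ single_le_sum (fun _ _ => Nat.zero_le _) (mem_Icc.2 ⟨hi, hir⟩)
    exact ⟨a i, ha_pos i hi hir, by omega, hc1 _ (ha_pos i hi hir) (by omega)⟩
  have hsum : ∑ i ∈ Icc 1 r, a i + ∑ j ∈ Icc 1 k, c j = n + (k + 1).choose 2 := by
    rw [ha_sum, sum_Icc_of_construction hc1 hc2 (by omega), hb_sum]; omega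
  refine ⟨by omega, fun i j hi hij hj => hmono ⟨hi, by omega⟩ ⟨by omega, hj⟩ hij, ha_mem,
    hsum, ⟨(Multiset.Icc 1 r).map a + (Multiset.Icc 1 k).map c, ?_, ?_⟩, rfl, ?_⟩
  · simp only [Multiset.mem_add, Multiset.mem_map, Multiset.mem_Icc]
    rintro _ (⟨i, ⟨hi, hir⟩, rfl⟩ | ⟨j, ⟨hj, hjk⟩, rfl⟩)
    · exact ha_pos i hi hir
    · exact lt_of_lt_of_le hj (self_le_of_construction hc1 hc2 hjk)
  · rw [Multiset.sum_add]; exact hsum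
  · have hsub : (Icc 1 r).image a ⊆ (Icc 1 k).image c := by
      simp only [subset_iff, mem_image, mem_Icc]
      rintro _ ⟨i, ⟨hi, hir⟩, rfl⟩
      obtain ⟨j, hj, hjs, hcj⟩ := ha_mem i hi hir
      exact ⟨j, ⟨hj, by omega⟩, hcj⟩
    change ((Icc 1 r).val.map a + (Icc 1 k).val.map c).toFinset.card = k
    rw [Multiset.toFinset_card_map_add_map_of_image_subset _ _ a c hsub
      (by simpa using hmono.injOn), Nat.card_Icc, Nat.add_sub_cancel]

theorem combinatorial_construction (k n m r s : ℕ) (hkn : n ≤ k) (hmn : m ≤ n)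
    (a b c : ℕ → ℕ)
    -- `a 1 ≤ ⋯ ≤ a r` is a partition of `m` (parts positive, non-decreasing)
    (ha_pos : ∀ i, 1 ≤ i → i ≤ r → 0 < a i)
    (ha_mono : ∀ i j, 1 ≤ i → i ≤ j → j ≤ r → a i ≤ a j)
    (ha_sum : ∑ i ∈ Finset.Icc 1 r, a i = m)
    -- `b 1 ≤ ⋯ ≤ b s` is a partition of `n - m`
    (hb_pos : ∀ i, 1 ≤ i → i ≤ s → 0 < b i)
    (hb_mono : ∀ i j, 1 ≤ i → i ≤ j → j ≤ s → b i ≤ b j)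
    (hb_sum : ∑ i ∈ Finset.Icc 1 s, b i = n - m)
    -- definition of `c`
    (hc1 : ∀ j, 1 ≤ j → j ≤ k - s → c j = j)
    (hc2 : ∀ j, k - s + 1 ≤ j → j ≤ k → c j = j + b (j - (k - s))) :
    -- conclusions
    r + s ≤ k ∧
    (∀ i j, 1 ≤ i → i < j → j ≤ k → c i < c j) ∧
    (∀ i, 1 ≤ i → i ≤ r → ∃ j, 1 ≤ j ∧ j ≤ k - s ∧ c j = a i) ∧
    ((∑ i ∈ Finset.Icc 1 r, a i) + ∑ j ∈ Finset.Icc 1 k, c j = n + (k + 1).choose 2) ∧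
    ∃ π : Nat.Partition (n + (k + 1).choose 2),
      π.parts = (Multiset.Icc 1 r).map a + (Multiset.Icc 1 k).map c ∧
      π.parts.toFinset.card = k :=
  combinatorial_construction_general k n m r s hkn hmn a b c ha_pos ha_sum hb_pos hb_mono hb_sum hc1
    hc2
end
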